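/- arXiv:1511.07779 — 2 statements merged into one kernel-verified Lean document; each statement's English description precedes it below -/
import Mathlib

section
/- If unit vectors v_1,...,v_m in R^n and positive weights a_1,...,a_m satisfy I_n = Σ a_j v_j ⊗ v_j and Σ a_j v_j = 0, then the convex hull of {v_1,...,v_m} contains the ball (1/n)·B_2^n. -/
/-!
Testing `x = Σ aⱼ ⟪vⱼ, x⟫ vⱼ` against an orthonormal basis gives `Σ aⱼ = n`, and against `u`
gives `‖u‖² = Σ aⱼ ⟪u, vⱼ⟫²`. If `⟪u, vⱼ⟫ ≤ c` for all `j`, then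
`(c - ⟪u, vⱼ⟫)(‖u‖ + ⟪u, vⱼ⟫) ≥ 0`; summing with weights `aⱼ` and using `Σ aⱼ vⱼ = 0` yields
`‖u‖² ≤ n c ‖u‖`. So every half-space containing the `vⱼ` contains `(1/n) B₂ⁿ`, and by
Hahn–Banach so does their convex hull.
-/

open RealInnerProductSpace Finset

section TightFrame

variable {E : Type*} [NormedAddCommGroup E] [InnerProductSpace ℝ E]
  {ι : Type*} [Fintype ι] {v : ι → E} {a : ι → ℝ}

theorem sum_mul_inner_sq_eq_norm_sq (hI : ∀ x, ∑ j, a j • ⟪v j, x⟫ • v j = x) (x : E) :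
    ∑ j, a j * ⟪v j, x⟫ ^ 2 = ‖x‖ ^ 2 := by
  conv_rhs => rw [← real_inner_self_eq_norm_sq]; enter [2]; rw [← hI x]
  simp only [inner_sum, real_inner_smul_right, real_inner_comm x]
  exact sum_congr rfl fun j _ => by ring

theorem sum_eq_finrank_of_sum_smul_inner_smul_eq [FiniteDimensional ℝ E]
    (hv : ∀ j, ‖v j‖ = 1) (hI : ∀ x, ∑ j, a j • ⟪v j, x⟫ • v j = x) :
    ∑ j, a j = Module.finrank ℝ E := by
  let b := stdOrthonormalBasis ℝ E
  calc ∑ j, a j = ∑ j, a j * ‖v j‖ ^ 2 := by simp [hv]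
    _ = ∑ j, a j * ∑ i, ⟪v j, b i⟫ ^ 2 := by simp only [b.sum_sq_inner_left]
    _ = ∑ i, ∑ j, a j * ⟪v j, b i⟫ ^ 2 := by simp only [mul_sum]; exact sum_comm
    _ = ∑ i, ‖b i‖ ^ 2 := by simp only [sum_mul_inner_sq_eq_norm_sq hI]
    _ = Module.finrank ℝ E := by simp [b.orthonormal.1]

theorem norm_le_sum_mul_of_inner_le (hv : ∀ j, ‖v j‖ ≤ 1) (ha : ∀ j, 0 ≤ a j)
    (hI : ∀ x, ∑ j, a j • ⟪v j, x⟫ • v j = x) (hbar : ∑ j, a j • v j = 0)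
    {u : E} {c : ℝ} (hc : ∀ j, ⟪u, v j⟫ ≤ c) :
    ‖u‖ ≤ (∑ j, a j) * c := by
  have hmean : ∑ j, a j * ⟪u, v j⟫ = 0 := by
    simpa only [inner_sum, real_inner_smul_right, inner_zero_right] using
      congrArg (⟪u, ·⟫) hbar
  have hbound : ∀ j, |⟪u, v j⟫| ≤ ‖u‖ := fun j =>
    (abs_real_inner_le_norm u (v j)).trans (mul_le_of_le_one_right (norm_nonneg u) (hv j))
  have hpointwise : ∀ j, a j * ⟪u, v j⟫ ^ 2 ≤ a j * (c * ‖u‖ + (c - ‖u‖) * ⟪u, v j⟫) := by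
    intro j
    have : 0 ≤ (c - ⟪u, v j⟫) * (‖u‖ + ⟪u, v j⟫) :=
      mul_nonneg (sub_nonneg.2 (hc j)) (by linarith [neg_abs_le ⟪u, v j⟫, hbound j])
    exact mul_le_mul_of_nonneg_left (by linarith) (ha j)
  have hsq : ‖u‖ ^ 2 ≤ (∑ j, a j) * c * ‖u‖ := by
    calc ‖u‖ ^ 2 = ∑ j, a j * ⟪u, v j⟫ ^ 2 := by
          rw [← sum_mul_inner_sq_eq_norm_sq hI u]; simp only [real_inner_comm u]
      _ ≤ ∑ j, a j * (c * ‖u‖ + (c - ‖u‖) * ⟪u, v j⟫) := sum_le_sum fun j _ => hpointwise j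
      _ = (∑ j, a j) * c * ‖u‖ + (c - ‖u‖) * ∑ j, a j * ⟪u, v j⟫ := by
          simp only [mul_add, sum_add_distrib, sum_mul, mul_sum]
          congr 1 <;> exact sum_congr rfl fun j _ => by ring
      _ = (∑ j, a j) * c * ‖u‖ := by rw [hmean]; ring
  have hc_nonneg : 0 ≤ (∑ j, a j) * c := by
    rw [sum_mul, ← hmean]
    exact sum_le_sum fun j _ => mul_le_mul_of_nonneg_left (hc j) (ha j)
  nlinarith [norm_nonneg u]

end TightFrame

theorem closedBall_subset_convexHull_of_forall_inner_le {E : Type*} [NormedAddCommGroup E]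
    [InnerProductSpace ℝ E] [CompleteSpace E] {ι : Type*} [Finite ι] {v : ι → E} {r : ℝ}
    (hsupp : ∀ (u : E) (c : ℝ), (∀ j, ⟪u, v j⟫ ≤ c) → r * ‖u‖ ≤ c) :
    Metric.closedBall 0 r ⊆ convexHull ℝ (Set.range v) := by
  intro x hx
  by_contra hxK
  obtain ⟨f, c, hfK, hfx⟩ := geometric_hahn_banach_closed_point (convex_convexHull ℝ _)
    ((Set.finite_range v).isCompact_convexHull ℝ).isClosed hxK
  set u := (InnerProductSpace.toDual ℝ E).symm f
  have hu : ∀ y, ⟪u, y⟫ = f y := fun y => InnerProductSpace.toDual_symm_apply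
  have hx' : ‖x‖ ≤ r := by simpa using hx
  have hru : r * ‖u‖ ≤ c := hsupp u c fun j =>
    (hu (v j)).symm ▸ (hfK _ (subset_convexHull ℝ _ (Set.mem_range_self j))).le
  have : f x ≤ r * ‖u‖ := by
    rw [← hu, mul_comm]
    exact (real_inner_le_norm u x).trans (mul_le_mul_of_nonneg_left hx' (norm_nonneg u))
  linarith

theorem john_ball_in_hull (n m : ℕ) (hn : 0 < n)
    (v : Fin m → EuclideanSpace ℝ (Fin n)) (a : Fin m → ℝ)
    (hv : ∀ j, ‖v j‖ = 1) (ha : ∀ j, 0 < a j)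
    (hI : ∀ x : EuclideanSpace ℝ (Fin n), ∑ j, a j • ⟪v j, x⟫ • v j = x)
    (hbar : ∑ j, a j • v j = 0) :
    Metric.closedBall (0 : EuclideanSpace ℝ (Fin n)) (1 / n) ⊆
      convexHull ℝ (Set.range v) := by
  have htrace : ∑ j, a j = n := by
    rw [sum_eq_finrank_of_sum_smul_inner_smul_eq hv hI, finrank_euclideanSpace_fin]
  refine closedBall_subset_convexHull_of_forall_inner_le fun u c hc => ?_
  have h := norm_le_sum_mul_of_inner_le (fun j => (hv j).le) (fun j => (ha j).le) hI hbar hc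
  rw [htrace] at h
  rw [one_div_mul_eq_div, div_le_iff₀ (by exact_mod_cast hn)]
  linarith
end

section
/- Let v_1,...,v_m ∈ S^{n-1}, b_1,...,b_m > 0 and v ∈ R^n satisfy Σ b_j v_j = −(Σ b_j)·v and (Σ b_j)·‖v‖₂² ≤ 1/2, together with I_n ⪯ Σ b_j (v_j+v) ⊗ (v_j+v) ⪯ 5 I_n. Then (1/2)·I_n ⪯ Σ b_j v_j ⊗ v_j ⪯ (11/2)·I_n. -/
open RealInnerProductSpace Finset

theorem cross_term_removal (n m : ℕ)
    (v : Fin m → EuclideanSpace ℝ (Fin n)) (b : Fin m → ℝ)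
    (w : EuclideanSpace ℝ (Fin n))
    (hv : ∀ j, ‖v j‖ = 1) (hb : ∀ j, 0 < b j)
    (hbar : ∑ j, b j • v j = -(∑ j, b j) • w)
    (hw : (∑ j, b j) * ‖w‖ ^ 2 ≤ 1 / 2)
    (hlow : ∀ x : EuclideanSpace ℝ (Fin n),
      ‖x‖ ^ 2 ≤ ∑ j, b j * ⟪v j + w, x⟫ ^ 2)
    (hup : ∀ x : EuclideanSpace ℝ (Fin n),
      ∑ j, b j * ⟪v j + w, x⟫ ^ 2 ≤ 5 * ‖x‖ ^ 2) :
    ∀ x : EuclideanSpace ℝ (Fin n),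
      (1 / 2) * ‖x‖ ^ 2 ≤ ∑ j, b j * ⟪v j, x⟫ ^ 2 ∧
      ∑ j, b j * ⟪v j, x⟫ ^ 2 ≤ (11 / 2) * ‖x‖ ^ 2 := by
  intro x
  have hS : (0:ℝ) ≤ ∑ j, b j := Finset.sum_nonneg fun j _ => (hb j).le
  have h1 : ∑ j, b j * ⟪v j, x⟫ = -(∑ j, b j) * ⟪w, x⟫ := by
    have h := congrArg (fun y : EuclideanSpace ℝ (Fin n) => ⟪y, x⟫) hbar
    simp only [sum_inner, real_inner_smul_left, neg_smul, inner_neg_left, neg_mul] at h ⊢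
    linarith
  have key : ∑ j, b j * ⟪v j + w, x⟫ ^ 2
      = ∑ j, b j * ⟪v j, x⟫ ^ 2 - (∑ j, b j) * ⟪w, x⟫ ^ 2 := by
    have expand : ∀ j ∈ Finset.univ, b j * ⟪v j + w, x⟫ ^ 2
        = b j * ⟪v j, x⟫ ^ 2 + 2 * ⟪w, x⟫ * (b j * ⟪v j, x⟫) + ⟪w, x⟫ ^ 2 * b j := by
      intro j _
      rw [inner_add_left]
      ring
    rw [Finset.sum_congr rfl expand, Finset.sum_add_distrib, Finset.sum_add_distrib,
      ← Finset.mul_sum, ← Finset.mul_sum, h1]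
    ring
  have hcs : ⟪w, x⟫ ^ 2 ≤ ‖w‖ ^ 2 * ‖x‖ ^ 2 := by
    have := abs_real_inner_le_norm w x
    nlinarith [abs_nonneg (⟪w, x⟫), sq_abs (⟪w, x⟫)]
  have hwx : (∑ j, b j) * ⟪w, x⟫ ^ 2 ≤ (1/2) * ‖x‖ ^ 2 := by
    nlinarith [sq_nonneg ‖x‖, mul_le_mul_of_nonneg_left hcs hS]
  constructor
  · nlinarith [hlow x, sq_nonneg (⟪w, x⟫), mul_nonneg hS (sq_nonneg (⟪w, x⟫)), sq_nonneg ‖x‖]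
  · nlinarith [hup x]
end
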